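/- For every element g of the braid group B_3 there exist g₁, …, g_m ∈ T = {a, b, ab, ba} and k ∈ ℤ with g = g₁g₂⋯g_m·Δᵏ; moreover, if m is minimal, the decomposition is unique (Garside's theorem for B_3). -/

import Mathlib

/-- The braid relation `aba = bab` (generator `false` is `a`, `true` is `b`). -/
def braidRel : Set (FreeGroup Bool) :=
  {FreeGroup.of false * FreeGroup.of true * FreeGroup.of false *
    (FreeGroup.of true * FreeGroup.of false * FreeGroup.of true)⁻¹}

/-- The braid group on three strands `B₃ = ⟨a, b ∣ aba = bab⟩`. -/
def B3 : Type := PresentedGroup braidRel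

instance : Group B3 := inferInstanceAs (Group (PresentedGroup braidRel))

/-- The generator `a` of `B₃`. -/
def ga : B3 := PresentedGroup.of false

/-- The generator `b` of `B₃`. -/
def gb : B3 := PresentedGroup.of true

/-- The Garside element `Δ = aba` of `B₃`. -/
def gΔ : B3 := ga * gb * ga

/-- The set `T = {a, b, ab, ba}` inside `B₃`. -/
def TsetB : Set B3 := {ga, gb, ga * gb, gb * ga}

/-- `g = g₁⋯g_m · Δᵏ` with `gᵢ ∈ T` and `k ∈ ℤ`. -/
def decompB (g : B3) (L : List B3) (k : ℤ) : Prop :=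
  (∀ x ∈ L, x ∈ TsetB) ∧ g = L.prod * gΔ ^ k

namespace Gar

lemma braid : ga * gb * ga = gb * ga * gb := by
  have h : (PresentedGroup.mk braidRel) (FreeGroup.of false * FreeGroup.of true *
      FreeGroup.of false * (FreeGroup.of true * FreeGroup.of false * FreeGroup.of true)⁻¹) = 1 := by
    apply (QuotientGroup.eq_one_iff _).mpr
    exact Subgroup.subset_normalClosure rfl
  simp only [map_mul, map_inv, mul_inv_eq_one] at h
  exact h

inductive S : Type | A | B | AB | BA
deriving DecidableEq

open S

def τ : S → S | A => B | B => A | AB => BA | BA => AB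

@[simp] lemma τ_τ (s : S) : τ (τ s) = s := by cases s <;> rfl

@[simp] lemma map_τ_τ (l : List S) : (l.map τ).map τ = l := by
  induction l with
  | nil => rfl
  | cons s l ih => simp [ih]

@[simp] lemma map_ττ_comp (l : List S) : List.map (τ ∘ τ) l = l := by
  induction l with
  | nil => rfl
  | cons s l ih => simp [ih]

def Rb : S → S → Bool
  | A, A | A, AB | B, B | B, BA | AB, B | AB, BA | BA, A | BA, AB => true
  | _, _ => false

def chb : List S → Bool
  | [] => true
  | [_] => true
  | s :: t :: l => Rb s t && chb (t :: l)

@[simp] lemma chb_nil : chb [] = true := rfl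
@[simp] lemma chb_single (s : S) : chb [s] = true := rfl
@[simp] lemma chb_cons2 (s t : S) (l : List S) :
    chb (s :: t :: l) = (Rb s t && chb (t :: l)) := rfl

lemma chb_tail {s : S} {l : List S} (h : chb (s :: l) = true) : chb l = true := by
  cases l with
  | nil => rfl
  | cons t l => simp only [chb_cons2, Bool.and_eq_true] at h; exact h.2

lemma chb_τ : ∀ l, chb (l.map τ) = chb l
  | [] => rfl
  | [s] => by cases s <;> rfl
  | s :: t :: l => by
      have ih := chb_τ (t :: l)
      cases s <;> cases t <;> simp_all [τ, Rb]

@[simp] lemma chb_τA (l : List S) : chb (B :: l.map τ) = chb (A :: l) := by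
  have := chb_τ (A :: l); simpa [τ] using this
@[simp] lemma chb_τB (l : List S) : chb (A :: l.map τ) = chb (B :: l) := by
  have := chb_τ (B :: l); simpa [τ] using this
@[simp] lemma chb_τAB (l : List S) : chb (BA :: l.map τ) = chb (AB :: l) := by
  have := chb_τ (AB :: l); simpa [τ] using this
@[simp] lemma chb_τBA (l : List S) : chb (AB :: l.map τ) = chb (BA :: l) := by
  have := chb_τ (BA :: l); simpa [τ] using this

abbrev N := List S × ℤ

def amap : N → N
  | ([], k) => ([A], k)
  | (A :: l, k) => (A :: A :: l, k)
  | (AB :: l, k) => (A :: AB :: l, k)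
  | (B :: l, k) => (AB :: l, k)
  | (BA :: l, k) => (l.map τ, k + 1)

def bmap : N → N
  | ([], k) => ([B], k)
  | (B :: l, k) => (B :: B :: l, k)
  | (BA :: l, k) => (B :: BA :: l, k)
  | (A :: l, k) => (BA :: l, k)
  | (AB :: l, k) => (l.map τ, k + 1)

def amap' : N → N
  | ([], k) => ([BA], k - 1)
  | (A :: l, k) => (l, k)
  | (AB :: l, k) => (B :: l, k)
  | (B :: l, k) => (BA :: A :: l.map τ, k - 1)
  | (BA :: l, k) => (BA :: AB :: l.map τ, k - 1)

def bmap' : N → N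
  | ([], k) => ([AB], k - 1)
  | (B :: l, k) => (l, k)
  | (BA :: l, k) => (A :: l, k)
  | (A :: l, k) => (AB :: B :: l.map τ, k - 1)
  | (AB :: l, k) => (AB :: BA :: l.map τ, k - 1)

lemma chb_amap : ∀ p : N, chb p.1 = true → chb (amap p).1 = true := by
  rintro ⟨(_ | ⟨s, (_ | ⟨t, l⟩)⟩), k⟩ h
  · first | rfl | (simp [amap, amap', bmap, bmap']; try omega)
  · cases s <;> simp_all [amap, amap', bmap, bmap', Rb, τ] <;> try omega
  · cases s <;> cases t <;> simp_all [amap, amap', bmap, bmap', Rb, τ] <;> try omega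

lemma chb_bmap : ∀ p : N, chb p.1 = true → chb (bmap p).1 = true := by
  rintro ⟨(_ | ⟨s, (_ | ⟨t, l⟩)⟩), k⟩ h
  · first | rfl | (simp [amap, amap', bmap, bmap']; try omega)
  · cases s <;> simp_all [amap, amap', bmap, bmap', Rb, τ] <;> try omega
  · cases s <;> cases t <;> simp_all [amap, amap', bmap, bmap', Rb, τ] <;> try omega

lemma chb_amap' : ∀ p : N, chb p.1 = true → chb (amap' p).1 = true := by
  rintro ⟨(_ | ⟨s, (_ | ⟨t, l⟩)⟩), k⟩ h
  · first | rfl | (simp [amap, amap', bmap, bmap']; try omega)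
  · cases s <;> simp_all [amap, amap', bmap, bmap', Rb, τ] <;> try omega
  · cases s <;> cases t <;> simp_all [amap, amap', bmap, bmap', Rb, τ] <;> try omega

lemma chb_bmap' : ∀ p : N, chb p.1 = true → chb (bmap' p).1 = true := by
  rintro ⟨(_ | ⟨s, (_ | ⟨t, l⟩)⟩), k⟩ h
  · first | rfl | (simp [amap, amap', bmap, bmap']; try omega)
  · cases s <;> simp_all [amap, amap', bmap, bmap', Rb, τ] <;> try omega
  · cases s <;> cases t <;> simp_all [amap, amap', bmap, bmap', Rb, τ] <;> try omega

lemma amap'_amap : ∀ p : N, chb p.1 = true → amap' (amap p) = p := by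
  rintro ⟨(_ | ⟨s, (_ | ⟨t, l⟩)⟩), k⟩ h
  · first | rfl | (simp [amap, amap', bmap, bmap']; try omega)
  · cases s <;> simp_all [amap, amap', bmap, bmap', Rb, τ] <;> try omega
  · cases s <;> cases t <;> simp_all [amap, amap', bmap, bmap', Rb, τ] <;> try omega

lemma amap_amap' : ∀ p : N, chb p.1 = true → amap (amap' p) = p := by
  rintro ⟨(_ | ⟨s, (_ | ⟨t, l⟩)⟩), k⟩ h
  · first | rfl | (simp [amap, amap', bmap, bmap']; try omega)
  · cases s <;> simp_all [amap, amap', bmap, bmap', Rb, τ] <;> try omega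
  · cases s <;> cases t <;> simp_all [amap, amap', bmap, bmap', Rb, τ] <;> try omega

lemma bmap'_bmap : ∀ p : N, chb p.1 = true → bmap' (bmap p) = p := by
  rintro ⟨(_ | ⟨s, (_ | ⟨t, l⟩)⟩), k⟩ h
  · first | rfl | (simp [amap, amap', bmap, bmap']; try omega)
  · cases s <;> simp_all [amap, amap', bmap, bmap', Rb, τ] <;> try omega
  · cases s <;> cases t <;> simp_all [amap, amap', bmap, bmap', Rb, τ] <;> try omega

lemma bmap_bmap' : ∀ p : N, chb p.1 = true → bmap (bmap' p) = p := by
  rintro ⟨(_ | ⟨s, (_ | ⟨t, l⟩)⟩), k⟩ h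
  · first | rfl | (simp [amap, amap', bmap, bmap']; try omega)
  · cases s <;> simp_all [amap, amap', bmap, bmap', Rb, τ] <;> try omega
  · cases s <;> cases t <;> simp_all [amap, amap', bmap, bmap', Rb, τ] <;> try omega

lemma aba_eq : ∀ (l : List S) (k : ℤ), chb l = true →
    amap (bmap (amap (l, k))) = (l.map τ, k + 1) := by
  rintro (_ | ⟨s, (_ | ⟨t, l⟩)⟩) k h
  · rfl
  · cases s <;> simp_all [amap, bmap, Rb, τ] <;> try omega
  · cases s <;> cases t <;> simp_all [amap, bmap, Rb, τ] <;> try omega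

lemma bab_eq : ∀ (l : List S) (k : ℤ), chb l = true →
    bmap (amap (bmap (l, k))) = (l.map τ, k + 1) := by
  rintro (_ | ⟨s, (_ | ⟨t, l⟩)⟩) k h
  · rfl
  · cases s <;> simp_all [amap, bmap, Rb, τ] <;> try omega
  · cases s <;> cases t <;> simp_all [amap, bmap, Rb, τ] <;> try omega

end Gar

namespace Gar
open S

def NF : Type := {p : N // chb p.1 = true}

def aperm : Equiv.Perm NF where
  toFun p := ⟨amap p.1, chb_amap p.1 p.2⟩
  invFun p := ⟨amap' p.1, chb_amap' p.1 p.2⟩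
  left_inv p := Subtype.ext (amap'_amap p.1 p.2)
  right_inv p := Subtype.ext (amap_amap' p.1 p.2)

def bperm : Equiv.Perm NF where
  toFun p := ⟨bmap p.1, chb_bmap p.1 p.2⟩
  invFun p := ⟨bmap' p.1, chb_bmap' p.1 p.2⟩
  left_inv p := Subtype.ext (bmap'_bmap p.1 p.2)
  right_inv p := Subtype.ext (bmap_bmap' p.1 p.2)

def fgen : Bool → Equiv.Perm NF
  | false => aperm
  | true => bperm

lemma perm_braid : aperm * bperm * aperm = bperm * aperm * bperm := by
  apply Equiv.ext
  rintro ⟨⟨l, k⟩, h⟩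
  show aperm (bperm (aperm _)) = bperm (aperm (bperm _))
  apply Subtype.ext
  show amap (bmap (amap (l, k))) = bmap (amap (bmap (l, k)))
  rw [aba_eq l k h, bab_eq l k h]

lemma hrel : ∀ r ∈ braidRel, FreeGroup.lift fgen r = 1 := by
  intro r hr
  rw [braidRel, Set.mem_singleton_iff] at hr
  subst hr
  simp only [map_mul, map_inv, FreeGroup.lift_apply_of, mul_inv_eq_one]
  show fgen false * fgen true * fgen false = fgen true * fgen false * fgen true
  exact perm_braid

def φ : B3 →* Equiv.Perm NF := PresentedGroup.toGroup hrel

lemma φ_a : φ ga = aperm := PresentedGroup.toGroup.of hrel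
lemma φ_b : φ gb = bperm := PresentedGroup.toGroup.of hrel

def base : NF := ⟨([], 0), rfl⟩

lemma φ_Δ (p : NF) : φ gΔ p = ⟨(p.1.1.map τ, p.1.2 + 1), by rw [chb_τ]; exact p.2⟩ := by
  obtain ⟨⟨l, k⟩, h⟩ := p
  show φ (ga * gb * ga) _ = _
  rw [map_mul, map_mul, φ_a, φ_b]
  simp only [Equiv.Perm.mul_apply]
  exact Subtype.ext (aba_eq l k h)

lemma φ_Δpow (k : ℤ) : φ (gΔ ^ k) base = ⟨([], k), rfl⟩ := by
  induction k using Int.induction_on with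
  | zero => simp [base]; rfl
  | succ n ih =>
      have h1 : gΔ ^ ((n : ℤ) + 1) = gΔ * gΔ ^ (n : ℤ) := by
        rw [← zpow_one_add]; ring_nf
      rw [h1, map_mul, Equiv.Perm.mul_apply, ih]
      exact φ_Δ _
  | pred n ih =>
      have h1 : gΔ ^ (-(n : ℤ)) = gΔ * gΔ ^ (-(n : ℤ) - 1) := by
        rw [← zpow_one_add]; ring_nf
      rw [h1, map_mul, Equiv.Perm.mul_apply, φ_Δ] at ih
      set q := φ (gΔ ^ (-(n : ℤ) - 1)) base with hq
      have hv := congrArg Subtype.val ih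
      have h2a : q.1.1.map τ = [] := congrArg Prod.fst hv
      have h2b : q.1.2 + 1 = -(n:ℤ) := congrArg Prod.snd hv
      apply Subtype.ext
      have h3 : q.1.1 = [] := by
        have := congrArg (List.map τ) h2a; simpa using this
      have h4 : q.1.2 = -(n:ℤ) - 1 := by omega
      calc q.1 = (q.1.1, q.1.2) := rfl
        _ = ([], -(n:ℤ) - 1) := by rw [h3, h4]

def evS : S → B3
  | A => ga
  | B => gb
  | AB => ga * gb
  | BA => gb * ga

def listev (l : List S) : B3 := (l.map evS).prod

@[simp] lemma listev_nil : listev [] = 1 := rfl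
@[simp] lemma listev_cons (s : S) (l : List S) : listev (s :: l) = evS s * listev l := by
  simp [listev]
lemma listev_append (l₁ l₂ : List S) : listev (l₁ ++ l₂) = listev l₁ * listev l₂ := by
  simp [listev]

def elem (l : List S) (k : ℤ) : B3 := listev l * gΔ ^ k

lemma prepend (s : S) (l : List S) (k : ℤ) (h : chb (s :: l) = true) (h' : chb l = true) :
    φ (evS s) ⟨(l, k), h'⟩ = ⟨(s :: l, k), h⟩ := by
  cases s
  case A =>
    rw [show evS A = ga from rfl, φ_a]
    apply Subtype.ext
    show amap (l, k) = (A :: l, k)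
    cases l with
    | nil => rfl
    | cons t l => cases t <;> simp_all [amap, Rb]
  case B =>
    rw [show evS B = gb from rfl, φ_b]
    apply Subtype.ext
    show bmap (l, k) = (B :: l, k)
    cases l with
    | nil => rfl
    | cons t l => cases t <;> simp_all [bmap, Rb]
  case AB =>
    rw [show evS AB = ga * gb from rfl, map_mul, φ_a, φ_b]
    apply Subtype.ext
    show amap (bmap (l, k)) = (AB :: l, k)
    cases l with
    | nil => rfl
    | cons t l => cases t <;> simp_all [amap, bmap, Rb]
  case BA =>
    rw [show evS BA = gb * ga from rfl, map_mul, φ_a, φ_b]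
    apply Subtype.ext
    show bmap (amap (l, k)) = (BA :: l, k)
    cases l with
    | nil => rfl
    | cons t l => cases t <;> simp_all [amap, bmap, Rb]

lemma chb_eval : ∀ (l : List S) (k : ℤ) (h : chb l = true),
    φ (elem l k) base = ⟨(l, k), h⟩ := by
  intro l
  induction l with
  | nil =>
      intro k h
      have : elem [] k = gΔ ^ k := by simp [elem]
      rw [this]; exact φ_Δpow k
  | cons s l ih =>
      intro k h
      have h' := chb_tail h
      have : elem (s :: l) k = evS s * elem l k := by simp [elem, mul_assoc]
      rw [this, map_mul, Equiv.Perm.mul_apply, ih k h', prepend s l k h h']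

lemma elem_inj {l₁ l₂ : List S} {k₁ k₂ : ℤ} (h₁ : chb l₁ = true) (h₂ : chb l₂ = true)
    (he : elem l₁ k₁ = elem l₂ k₂) : l₁ = l₂ ∧ k₁ = k₂ := by
  have h := congrArg (fun g : B3 => φ g base) he
  simp only [chb_eval l₁ k₁ h₁, chb_eval l₂ k₂ h₂] at h
  have := congrArg Subtype.val h
  exact ⟨congrArg Prod.fst this, congrArg Prod.snd this⟩

end Gar

namespace Gar
open S

lemma braid' : gb * (ga * gb) = ga * (gb * ga) := by
  have := braid; rw [mul_assoc, mul_assoc] at this; exact this.symm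

lemma ΔconjA : gΔ * ga = gb * gΔ := by
  show ga * gb * ga * ga = gb * (ga * gb * ga)
  rw [show gb * (ga * gb * ga) = gb * (ga * gb) * ga by group, braid']
  group

lemma ΔconjB : gΔ * gb = ga * gΔ := by
  show ga * gb * ga * gb = ga * (ga * gb * ga)
  rw [show ga * gb * ga * gb = ga * (gb * (ga * gb)) by group, braid']
  group

lemma Δconj (s : S) : gΔ * evS s = evS (τ s) * gΔ := by
  cases s
  · exact ΔconjA
  · exact ΔconjB
  · show gΔ * (ga * gb) = gb * ga * gΔ
    calc gΔ * (ga * gb) = (gΔ * ga) * gb := by group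
      _ = gb * (gΔ * gb) := by rw [ΔconjA]; group
      _ = gb * (ga * gΔ) := by rw [ΔconjB]
      _ = gb * ga * gΔ := by group
  · show gΔ * (gb * ga) = ga * gb * gΔ
    calc gΔ * (gb * ga) = (gΔ * gb) * ga := by group
      _ = ga * (gΔ * ga) := by rw [ΔconjB]; group
      _ = ga * (gb * gΔ) := by rw [ΔconjA]
      _ = ga * gb * gΔ := by group

def τpow (k : ℤ) (s : S) : S := if Even k then s else τ s

lemma commΔ2 (t : S) : Commute (gΔ * gΔ) (evS t) := by
  show gΔ * gΔ * evS t = evS t * (gΔ * gΔ)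
  rw [mul_assoc, Δconj, ← mul_assoc, Δconj, τ_τ, mul_assoc]

lemma pushΔ (k : ℤ) (s : S) : gΔ ^ k * evS s = evS (τpow k s) * gΔ ^ k := by
  rcases Int.even_or_odd k with he | ho
  · obtain ⟨m, hm⟩ := he
    have h2 : gΔ ^ k = (gΔ * gΔ) ^ m := by
      rw [hm, show m + m = 2 * m by ring, zpow_mul, zpow_two]
    rw [h2, τpow, if_pos (by exact ⟨m, hm⟩), ((commΔ2 s).zpow_left m).eq]
  · obtain ⟨m, hm⟩ := ho
    have h2 : gΔ ^ k = (gΔ * gΔ) ^ m * gΔ := by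
      rw [hm, zpow_add, zpow_one, zpow_mul, zpow_two]
    rw [h2, τpow, if_neg (by simpa using (Int.not_even_iff_odd.mpr ⟨m, hm⟩)),
      mul_assoc, Δconj, ← mul_assoc, ((commΔ2 (τ s)).zpow_left m).eq, mul_assoc]

lemma pushΔ_list (k : ℤ) : ∀ l : List S,
    gΔ ^ k * listev l = listev (l.map (τpow k)) * gΔ ^ k
  | [] => by simp
  | s :: l => by
      rw [listev_cons, ← mul_assoc, pushΔ, mul_assoc, pushΔ_list k l, List.map_cons,
        listev_cons, mul_assoc]

lemma elem_mul (l₁ l₂ : List S) (k₁ k₂ : ℤ) :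
    elem l₁ k₁ * elem l₂ k₂ = elem (l₁ ++ l₂.map (τpow k₁)) (k₁ + k₂) := by
  unfold elem
  rw [listev_append]
  calc listev l₁ * gΔ ^ k₁ * (listev l₂ * gΔ ^ k₂)
      = listev l₁ * (gΔ ^ k₁ * listev l₂) * gΔ ^ k₂ := by group
    _ = listev l₁ * (listev (l₂.map (τpow k₁)) * gΔ ^ k₁) * gΔ ^ k₂ := by
        rw [pushΔ_list]
    _ = listev l₁ * listev (l₂.map (τpow k₁)) * (gΔ ^ k₁ * gΔ ^ k₂) := by group
    _ = listev l₁ * listev (l₂.map (τpow k₁)) * gΔ ^ (k₁ + k₂) := by rw [← zpow_add]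

lemma pex : ∀ g : B3, ∃ l k, g = elem l k := by
  intro g
  obtain ⟨w, rfl⟩ := PresentedGroup.mk_surjective braidRel g
  induction w using FreeGroup.induction_on with
  | C1 => exact ⟨[], 0, by simp [elem]; rfl⟩
  | of x =>
      cases x
      · exact ⟨[A], 0, by simp [elem, evS]; rfl⟩
      · exact ⟨[B], 0, by simp [elem, evS]; rfl⟩
  | inv_of x _ =>
      rw [map_inv]
      cases x
      · refine ⟨[BA], -1, ?_⟩
        have : (PresentedGroup.mk braidRel) (FreeGroup.of false) = ga := rfl
        rw [this]
        show ga⁻¹ = listev [BA] * gΔ ^ (-1 : ℤ)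
        rw [show listev [BA] = gb * ga by simp [listev, evS], zpow_neg, zpow_one, gΔ]
        group
      · refine ⟨[AB], -1, ?_⟩
        have : (PresentedGroup.mk braidRel) (FreeGroup.of true) = gb := rfl
        rw [this]
        show gb⁻¹ = listev [AB] * gΔ ^ (-1 : ℤ)
        rw [show listev [AB] = ga * gb by simp [listev, evS], zpow_neg, zpow_one, gΔ, braid]
        group
  | mul x y hx hy =>
      obtain ⟨l₁, k₁, h₁⟩ := hx
      obtain ⟨l₂, k₂, h₂⟩ := hy
      rw [map_mul, h₁, h₂]
      exact ⟨_, _, elem_mul l₁ l₂ k₁ k₂⟩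

end Gar

namespace Gar
open S

lemma evS_mem (s : S) : evS s ∈ TsetB := by
  cases s <;> simp [TsetB, evS]

lemma decompB_elem (l : List S) (k : ℤ) : decompB (elem l k) (l.map evS) k := by
  constructor
  · intro x hx
    obtain ⟨s, _, rfl⟩ := List.mem_map.mp hx
    exact evS_mem s
  · rfl

lemma decompB_rep {g : B3} {L : List B3} {k : ℤ} (h : decompB g L k) :
    ∃ l : List S, L = l.map evS ∧ g = elem l k := by
  obtain ⟨hmem, hg⟩ := h
  have : ∃ l : List S, L = l.map evS := by
    clear hg
    induction L with
    | nil => exact ⟨[], rfl⟩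
    | cons x L ih =>
        obtain ⟨l, hl⟩ := ih (fun y hy => hmem y (List.mem_cons_of_mem x hy))
        have hx := hmem x List.mem_cons_self
        simp only [TsetB, Set.mem_insert_iff, Set.mem_singleton_iff] at hx
        rcases hx with h | h | h | h
        · exact ⟨A :: l, by simp [evS, hl, h]⟩
        · exact ⟨B :: l, by simp [evS, hl, h]⟩
        · exact ⟨AB :: l, by simp [evS, hl, h]⟩
        · exact ⟨BA :: l, by simp [evS, hl, h]⟩
  obtain ⟨l, hl⟩ := this
  refine ⟨l, hl, ?_⟩
  rw [hg, hl]
  rfl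

def red : S → S → List S
  | A, B => [AB]
  | B, A => [BA]
  | AB, AB => [A]
  | BA, BA => [B]
  | _, _ => []

def rede : S → S → ℤ
  | A, B => 0
  | B, A => 0
  | _, _ => 1

lemma red_len (s t : S) : (red s t).length ≤ 1 := by
  cases s <;> cases t <;> simp [red]

lemma red_spec (s t : S) (h : Rb s t = false) :
    evS s * evS t = listev (red s t) * gΔ ^ (rede s t) := by
  cases s <;> cases t
  case A.A => simp [Rb] at h
  case A.AB => simp [Rb] at h
  case B.B => simp [Rb] at h
  case B.BA => simp [Rb] at h
  case AB.B => simp [Rb] at h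
  case AB.BA => simp [Rb] at h
  case BA.A => simp [Rb] at h
  case BA.AB => simp [Rb] at h
  case A.B => show ga * gb = listev [AB] * gΔ ^ (0:ℤ); simp [listev, evS]
  case B.A => show gb * ga = listev [BA] * gΔ ^ (0:ℤ); simp [listev, evS]
  case A.BA =>
    show ga * (gb * ga) = listev [] * gΔ ^ (1:ℤ)
    simp only [listev_nil, one_mul, zpow_one, gΔ]; group
  case AB.A =>
    show (ga * gb) * ga = listev [] * gΔ ^ (1:ℤ)
    simp only [listev_nil, one_mul, zpow_one, gΔ]
  case B.AB =>
    show gb * (ga * gb) = listev [] * gΔ ^ (1:ℤ)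
    simp only [listev_nil, one_mul, zpow_one, gΔ, braid]; group
  case BA.B =>
    show (gb * ga) * gb = listev [] * gΔ ^ (1:ℤ)
    simp only [listev_nil, one_mul, zpow_one, gΔ, braid]
  case AB.AB =>
    show (ga * gb) * (ga * gb) = listev [A] * gΔ ^ (1:ℤ)
    calc (ga * gb) * (ga * gb) = ga * (gb * (ga * gb)) := by group
      _ = ga * (ga * (gb * ga)) := by rw [braid']
      _ = listev [A] * gΔ ^ (1:ℤ) := by
          simp only [listev_cons, listev_nil, mul_one, zpow_one, gΔ, evS]; group
  case BA.BA =>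
    show (gb * ga) * (gb * ga) = listev [B] * gΔ ^ (1:ℤ)
    calc (gb * ga) * (gb * ga) = gb * (ga * gb * ga) := by group
      _ = listev [B] * gΔ ^ (1:ℤ) := by
          simp only [listev_cons, listev_nil, mul_one, zpow_one, gΔ, evS]

lemma shorten (u v : List S) (s t : S) (k : ℤ) (h : Rb s t = false) :
    elem (u ++ s :: t :: v) k =
      elem (u ++ red s t ++ v.map (τpow (rede s t))) (rede s t + k) := by
  unfold elem
  rw [listev_append, listev_cons, listev_cons, listev_append, listev_append]
  calc listev u * (evS s * (evS t * listev v)) * gΔ ^ k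
      = listev u * ((evS s * evS t) * listev v) * gΔ ^ k := by group
    _ = listev u * ((listev (red s t) * gΔ ^ (rede s t)) * listev v) * gΔ ^ k := by
        rw [red_spec s t h]
    _ = listev u * (listev (red s t) * (gΔ ^ (rede s t) * listev v)) * gΔ ^ k := by group
    _ = listev u * (listev (red s t) *
          (listev (v.map (τpow (rede s t))) * gΔ ^ (rede s t))) * gΔ ^ k := by
        rw [pushΔ_list]
    _ = listev u * listev (red s t) * listev (v.map (τpow (rede s t))) *
          (gΔ ^ (rede s t) * gΔ ^ k) := by group
    _ = listev u * listev (red s t) * listev (v.map (τpow (rede s t))) *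
          gΔ ^ (rede s t + k) := by rw [← zpow_add]

lemma not_chb : ∀ l : List S, chb l = false →
    ∃ u s t v, l = u ++ s :: t :: v ∧ Rb s t = false
  | [] => by intro h; exact absurd h (by simp)
  | [s] => by intro h; exact absurd h (by simp)
  | s :: t :: l => by
      intro h
      cases hst : Rb s t with
      | false => exact ⟨[], s, t, l, rfl, hst⟩
      | true =>
          have h2 : chb (t :: l) = false := by
            rw [chb_cons2, hst] at h; simpa using h
          obtain ⟨u, s', t', v, hl, hr⟩ := not_chb (t :: l) h2
          exact ⟨s :: u, s', t', v, by simp [hl], hr⟩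

lemma min_chb {g : B3} {l : List S} {k : ℤ} (hg : g = elem l k)
    (hmin : ∀ L' k', decompB g L' k' → (l.map evS).length ≤ L'.length) :
    chb l = true := by
  by_contra hc
  have hc' : chb l = false := by simpa using hc
  obtain ⟨u, s, t, v, rfl, hst⟩ := not_chb l hc'
  have heq := shorten u v s t k hst
  have hd : decompB g ((u ++ red s t ++ v.map (τpow (rede s t))).map evS)
      (rede s t + k) := by
    rw [hg, heq]; exact decompB_elem _ _
  have hle := hmin _ _ hd
  have hr := red_len s t
  simp only [List.length_map, List.length_append, List.length_cons] at hle
  omega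

end Gar

/-- Garside's theorem for `B₃`: every element decomposes as `g₁⋯g_m·Δᵏ` with
`gᵢ ∈ T`, `k ∈ ℤ`; if `m` is minimal, the decomposition is unique. -/
theorem garside_normal_form_b3 :
    ∀ g : B3,
      (∃ L k, decompB g L k) ∧
      ∀ L₁ k₁ L₂ k₂, decompB g L₁ k₁ → decompB g L₂ k₂ →
        (∀ L' k', decompB g L' k' → L₁.length ≤ L'.length) →
        (∀ L' k', decompB g L' k' → L₂.length ≤ L'.length) →
        L₁ = L₂ ∧ k₁ = k₂ := by
  intro g
  constructor
  · obtain ⟨l, k, rfl⟩ := Gar.pex g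
    exact ⟨l.map Gar.evS, k, Gar.decompB_elem l k⟩
  · intro L₁ k₁ L₂ k₂ h1 h2 min1 min2
    obtain ⟨l₁, rfl, hg1⟩ := Gar.decompB_rep h1
    obtain ⟨l₂, rfl, hg2⟩ := Gar.decompB_rep h2
    have hc1 : Gar.chb l₁ = true := Gar.min_chb hg1 min1
    have hc2 : Gar.chb l₂ = true := Gar.min_chb hg2 min2
    obtain ⟨hl, hk⟩ := Gar.elem_inj hc1 hc2 (hg1 ▸ hg2)
    exact ⟨by rw [hl], hk⟩
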